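/- arXiv:1808.05840 — 2 statements merged into one kernel-verified Lean document; each statement's English description precedes it below -/
import Mathlib

section
/- Let α ≥ 2 be a real number, let ε₁ and ε₂ be real numbers with 0 < ε₁ ≤ 1 ≤ ε₂, and let T' : ℕ → ℝ satisfy ε₁·n^α ≤ T'(n) ≤ ε₂·n^α for every natural number n ≥ 1. Fix natural numbers m and n₀, set n = 2^(2^(m+n₀)) and p = ⌊(log₂ (T'(n)) − log₂ ε₁)/2^(n₀)⌋. Then ⌊α·2^m⌋ ≤ p and (p : ℝ) ≤ α·2^m + log₂(ε₂/ε₁)/2^(n₀). -/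
/-! Since log₂ (n ^ α) = α · 2 ^ m · 2 ^ n₀, taking log₂ of the two bounds on `T' n` places
`log₂ (T' n) - log₂ ε₁` between `α · 2 ^ m · 2 ^ n₀` and that value plus `log₂ (ε₂ / ε₁)`;
dividing by `2 ^ n₀` and taking floors gives both inequalities. -/

namespace Real

variable {b : ℝ}

theorem logb_rpow_pow_self (hb : 0 < b) (hb1 : b ≠ 1) (k : ℕ) (α : ℝ) :
    logb b ((b ^ k) ^ α) = α * k := by
  rw [← rpow_natCast, ← rpow_mul hb.le, logb_rpow hb hb1, mul_comm]

variable {ε₁ ε₂ t x : ℝ}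

theorem logb_le_logb_sub_logb_of_mul_le (hb : 1 < b) (hε₁ : 0 < ε₁) (hx : 0 < x)
    (h : ε₁ * x ≤ t) : logb b x ≤ logb b t - logb b ε₁ := by
  have ht : 0 < t := (mul_pos hε₁ hx).trans_le h
  rw [← logb_div ht.ne' hε₁.ne']
  exact logb_le_logb_of_le hb hx ((le_div_iff₀' hε₁).2 h)

theorem logb_sub_logb_le_logb_add_logb_div_of_le_mul (hb : 1 < b) (hε₁ : 0 < ε₁)
    (hx : 0 < x) (hlow : ε₁ * x ≤ t) (h : t ≤ ε₂ * x) :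
    logb b t - logb b ε₁ ≤ logb b x + logb b (ε₂ / ε₁) := by
  have ht : 0 < t := (mul_pos hε₁ hx).trans_le hlow
  have hε₂ : 0 < ε₂ := pos_of_mul_pos_left (ht.trans_le h) hx.le
  rw [← logb_div ht.ne' hε₁.ne', ← logb_mul hx.ne' (div_pos hε₂ hε₁).ne']
  refine logb_le_logb_of_le hb (div_pos ht hε₁) ?_
  rw [div_le_iff₀ hε₁]
  calc t ≤ ε₂ * x := h
    _ = x * (ε₂ / ε₁) * ε₁ := by field_simp

end Real

theorem Int.floor_le_floor_div_of_mul_le {a c d : ℝ} (hd : 0 < d) (h : a * d ≤ c) :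
    ⌊a⌋ ≤ ⌊c / d⌋ :=
  Int.floor_le_floor ((le_div_iff₀ hd).2 h)

theorem Int.floor_div_le_add_div_of_le_mul_add {a c d e : ℝ} (hd : 0 < d)
    (h : c ≤ a * d + e) : (⌊c / d⌋ : ℝ) ≤ a + e / d :=
  calc (⌊c / d⌋ : ℝ) ≤ c / d := Int.floor_le _
    _ ≤ (a * d + e) / d := div_le_div_of_nonneg_right h hd.le
    _ = a + e / d := by rw [add_div, mul_div_cancel_right₀ _ hd.ne']

theorem stmt_1_general (α : ℝ) (ε₁ ε₂ : ℝ) (hε₁ : 0 < ε₁) (T' : ℕ → ℝ)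
    (hT : ∀ n : ℕ, 1 ≤ n → ε₁ * (n : ℝ) ^ α ≤ T' n ∧ T' n ≤ ε₂ * (n : ℝ) ^ α)
    (m n₀ : ℕ) (n : ℕ) (hn : n = 2 ^ (2 ^ (m + n₀)))
    (p : ℤ) (hp : p = ⌊(Real.logb 2 (T' n) - Real.logb 2 ε₁) / 2 ^ n₀⌋) :
    ⌊α * 2 ^ m⌋ ≤ p ∧ (p : ℝ) ≤ α * 2 ^ m + Real.logb 2 (ε₂ / ε₁) / 2 ^ n₀ := by
  obtain ⟨hlow, hupp⟩ := hT n (hn ▸ Nat.one_le_two_pow)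
  have hnα : 0 < (n : ℝ) ^ α := by rw [hn]; positivity
  have hlogn : Real.logb 2 ((n : ℝ) ^ α) = α * 2 ^ m * 2 ^ n₀ := by
    rw [hn, Nat.cast_pow, Nat.cast_ofNat, Real.logb_rpow_pow_self two_pos (by norm_num),
      pow_add]
    push_cast
    ring
  have h2 : (0 : ℝ) < 2 ^ n₀ := by positivity
  subst hp
  constructor
  · refine Int.floor_le_floor_div_of_mul_le h2 ?_
    rw [← hlogn]
    exact Real.logb_le_logb_sub_logb_of_mul_le one_lt_two hε₁ hnα hlow
  · refine Int.floor_div_le_add_div_of_le_mul_add h2 ?_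
    rw [← hlogn]
    exact Real.logb_sub_logb_le_logb_add_logb_div_of_le_mul one_lt_two hε₁ hnα hlow hupp

theorem stmt_1 (α : ℝ) (hα : 2 ≤ α) (ε₁ ε₂ : ℝ) (hε₁ : 0 < ε₁) (hε₁1 : ε₁ ≤ 1)
    (hε₂ : 1 ≤ ε₂) (T' : ℕ → ℝ)
    (hT : ∀ n : ℕ, 1 ≤ n → ε₁ * (n : ℝ) ^ α ≤ T' n ∧ T' n ≤ ε₂ * (n : ℝ) ^ α)
    (m n₀ : ℕ) (n : ℕ) (hn : n = 2 ^ (2 ^ (m + n₀)))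
    (p : ℤ) (hp : p = ⌊(Real.logb 2 (T' n) - Real.logb 2 ε₁) / 2 ^ n₀⌋) :
    ⌊α * 2 ^ m⌋ ≤ p ∧ (p : ℝ) ≤ α * 2 ^ m + Real.logb 2 (ε₂ / ε₁) / 2 ^ n₀ :=
  stmt_1_general α ε₁ ε₂ hε₁ T' hT m n₀ n hn p hp
end

section
/- Let α ≥ 2 be a real number, let ε₁ and ε₂ be real numbers with 0 < ε₁ ≤ 1 ≤ ε₂, and let T' : ℕ → ℝ satisfy ε₁·n^α ≤ T'(n) ≤ ε₂·n^α for every natural number n ≥ 1. Fix natural numbers m and n₀ such that 2^(n₀) > log₂(ε₂/ε₁). Set n = 2^(2^(m+n₀)) and p = ⌊(log₂ (T'(n)) − log₂ ε₁)/2^(n₀)⌋. Then |(p : ℝ)/2^m − α| < 1/2^m; that is, the binary rational p/2^m approximates α with error less than 1/2^m. -/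
/-!
Taking base-2 logarithms of `ε₁ n^α ≤ T'(n) ≤ ε₂ n^α` for `n = 2^(2^(m+n₀))` gives
`α 2^(m+n₀) ≤ log₂ T'(n) - log₂ ε₁ ≤ α 2^(m+n₀) + log₂(ε₂/ε₁)`. Dividing by `2^n₀`, the
hypothesis on `n₀` squeezes the quotient into `[α 2^m, α 2^m + 1)`, so its floor `p` is within
`1` of `α 2^m`.
-/

open Real

lemma logb_sub_logb_mem_of_rpow_bounds {b c C x y α : ℝ} (hb : 1 < b) (hc : 0 < c)
    (hx : 0 < x) (hlo : c * x ^ α ≤ y) (hhi : y ≤ C * x ^ α) :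
    α * logb b x ≤ logb b y - logb b c ∧ logb b y - logb b c ≤ α * logb b x + logb b (C / c) := by
  have hxα : 0 < x ^ α := rpow_pos_of_pos hx α
  have hy : 0 < y := (mul_pos hc hxα).trans_le hlo
  have hCc : 0 < C / c := by
    have : 0 < C * x ^ α := hy.trans_le hhi
    exact div_pos (pos_of_mul_pos_left this hxα.le) hc
  rw [← logb_div hy.ne' hc.ne', ← logb_rpow_eq_mul_logb_of_pos hx]
  constructor
  · exact logb_le_logb_of_le hb hxα ((le_div_iff₀' hc).2 hlo)
  · rw [add_comm, ← logb_mul hCc.ne' hxα.ne']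
    refine logb_le_logb_of_le hb (div_pos hy hc) ?_
    rwa [div_mul_eq_mul_div, div_le_div_iff_of_pos_right hc]

lemma logb_two_two_pow_two_pow (k : ℕ) : logb 2 ((2 ^ 2 ^ k : ℕ) : ℝ) = 2 ^ k := by
  rw [Nat.cast_pow, Nat.cast_ofNat, logb_pow, logb_self_eq_one one_lt_two, mul_one]
  norm_cast

lemma abs_floor_div_sub_lt {d a x : ℝ} (hd : 0 < d) (hlo : d * a ≤ x) (hhi : x < d * a + 1) :
    |(⌊x⌋ : ℝ) / d - a| < 1 / d := by
  have hfloor : |(⌊x⌋ : ℝ) - d * a| < 1 := by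
    rw [abs_sub_lt_iff]
    constructor <;> linarith [Int.floor_le x, Int.sub_one_lt_floor x]
  rw [← mul_div_cancel_left₀ a hd.ne', ← sub_div, abs_div, abs_of_pos hd]
  exact div_lt_div_of_pos_right hfloor hd

theorem stmt_2_general (α : ℝ) (ε₁ ε₂ : ℝ) (hε₁ : 0 < ε₁) (T' : ℕ → ℝ)
    (hT : ∀ n : ℕ, 1 ≤ n → ε₁ * (n : ℝ) ^ α ≤ T' n ∧ T' n ≤ ε₂ * (n : ℝ) ^ α)
    (m n₀ : ℕ) (hn₀ : Real.logb 2 (ε₂ / ε₁) < 2 ^ n₀)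
    (n : ℕ) (hn : n = 2 ^ (2 ^ (m + n₀)))
    (p : ℤ) (hp : p = ⌊(Real.logb 2 (T' n) - Real.logb 2 ε₁) / 2 ^ n₀⌋) :
    |(p : ℝ) / 2 ^ m - α| < 1 / 2 ^ m := by
  subst hn hp
  have hn_pos : 0 < 2 ^ 2 ^ (m + n₀) := Nat.two_pow_pos _
  obtain ⟨hlo, hhi⟩ := hT _ hn_pos
  obtain ⟨hlog_lo, hlog_hi⟩ :=
    logb_sub_logb_mem_of_rpow_bounds one_lt_two hε₁ (Nat.cast_pos.2 hn_pos) hlo hhi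
  have h2k : (2 : ℝ) ^ (m + n₀) = 2 ^ m * 2 ^ n₀ := pow_add _ _ _
  rw [logb_two_two_pow_two_pow, h2k] at hlog_lo hlog_hi
  have h2n₀ : (0 : ℝ) < 2 ^ n₀ := by positivity
  apply abs_floor_div_sub_lt (by positivity)
  · rw [le_div_iff₀ h2n₀]
    linarith
  · rw [div_lt_iff₀ h2n₀]
    linarith

theorem stmt_2 (α : ℝ) (hα : 2 ≤ α) (ε₁ ε₂ : ℝ) (hε₁ : 0 < ε₁) (hε₁1 : ε₁ ≤ 1)
    (hε₂ : 1 ≤ ε₂) (T' : ℕ → ℝ)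
    (hT : ∀ n : ℕ, 1 ≤ n → ε₁ * (n : ℝ) ^ α ≤ T' n ∧ T' n ≤ ε₂ * (n : ℝ) ^ α)
    (m n₀ : ℕ) (hn₀ : Real.logb 2 (ε₂ / ε₁) < 2 ^ n₀)
    (n : ℕ) (hn : n = 2 ^ (2 ^ (m + n₀)))
    (p : ℤ) (hp : p = ⌊(Real.logb 2 (T' n) - Real.logb 2 ε₁) / 2 ^ n₀⌋) :
    |(p : ℝ) / 2 ^ m - α| < 1 / 2 ^ m :=
  stmt_2_general α ε₁ ε₂ hε₁ T' hT m n₀ hn₀ n hn p hp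
end
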